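/- arXiv:1912.00901 — 2 statements merged into one kernel-verified Lean document; each statement's English description precedes it below -/
import Mathlib

section
/- Let G be a finite non-abelian group and C = ⟨c⟩ a subgroup of G such that: C is cyclic of order a power of a prime r, C is characteristic in G, C ∩ Z(G) = {1}, and there exists a ∈ G inducing by conjugation on C an automorphism whose order is not a power of r. Let γ be a gamma function on G and suppose that γ(c') = ι(c'^{−σ}) for every c' ∈ C, for some function σ : C → C. Then either σ = 0 (i.e. C ≤ ker(γ)), or σ = 1 (i.e. γ(c') = ι(c'⁻¹) for all c' ∈ C, so that C ≤ ker(γ̃), where γ̃(x) = γ(x⁻¹)ι(x⁻¹)). -/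
/- Formalization of results from "Hopf-Galois structures on extensions of degree p²q and
skew braces of order p²q: the cyclic Sylow p-subgroup case" (Campedel, Caranti, Del Corso).

Conventions: the paper composes permutations/automorphisms left-to-right and writes
`x^α` for the action; in Mathlib composition is right-to-left, so the paper's product
`αβ` is rendered as `β * α`, the paper's `x^α` as `α x`, and the paper's conjugate
`α^β = β⁻¹αβ` as `β * α * β⁻¹`. -/

namespace HGS

universe u v

variable {G : Type*} [Group G]

/-- A gamma function (GF) on `G`: a map `γ : G → Aut G` satisfying the gamma functional
equation `γ(g^{γ(h)}·h) = γ(g)γ(h)` (the right-hand side is the paper's product, which in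
Mathlib's composition order reads `γ h * γ g`). -/
def IsGammaFunction (γ : G → MulAut G) : Prop :=
  ∀ g h : G, γ (γ h g * h) = γ h * γ g

/-- The circle operation `g ∘ h = g^{γ(h)} · h` associated to a gamma function. -/
def circ (γ : G → MulAut G) (g h : G) : G := γ h g * h

/- Injectivity of `ι` on `C` (as `C ∩ Z(G) = 1`) turns the functional equation into
multiplicativity of `σ` on `C`, so `σ` is a power map `x ↦ x^m` of the cyclic group `C`.
For `u ∈ C`, the functional equation applied to `u·a = x ∘ a` (with `x = u^{γ(a)⁻¹}`) and then to
`z = b ∘ (u·a)`, where `b = (a⁻¹)^{γ(a)⁻¹}` satisfies `γ(b) = γ(a)⁻¹`, gives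
`z = u^m · (u^{1-m})^a ∈ C` and `γ(z) = ι(u^{-m})`. Comparing with `γ(z) = ι(z^{-m})` shows that
conjugation by `a` fixes `u^{m(1-m)}`. An automorphism of a cyclic `r`-group fixing a nontrivial
element has `r`-power order, hence `c^{m(1-m)} = 1`; as `m` and `1 - m` are coprime, `r^k` divides
`m` (so `σ = 0`) or `1 - m` (so `σ = 1`). -/

open Subgroup

theorem pow_dvd_or_pow_dvd_of_isCoprime {R : Type*} [CommRing R] [IsDomain R] [IsBezout R]
    {p a b : R} (hp : Prime p) (hab : IsCoprime a b) {k : ℕ} (h : p ^ k ∣ a * b) :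
    p ^ k ∣ a ∨ p ^ k ∣ b := by
  by_cases hpa : p ∣ a
  · have hpb : ¬p ∣ b := fun hpb => hp.not_isUnit (hab.isUnit_of_dvd' hpa hpb)
    exact .inl ((hp.coprime_iff_not_dvd.2 hpb).pow_left.dvd_of_dvd_mul_right h)
  · exact .inr ((hp.coprime_iff_not_dvd.2 hpa).pow_left.dvd_of_dvd_mul_left h)

theorem exists_orderOf_eq_prime_pow_of_apply_eq_self {H : Type*} [Group H] [IsCyclic H]
    {r k : ℕ} (hr : r.Prime) (hH : Nat.card H = r ^ k) (φ : MulAut H) {y : H} (hy : y ≠ 1)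
    (hφy : φ y = y) : ∃ n : ℕ, orderOf φ = r ^ n := by
  obtain ⟨w, hw⟩ : ∃ w : ℤ, ∀ g, φ g = g ^ w := φ.toMonoidHom.map_cyclic
  have hφ_pow : ∀ (n : ℕ) (g : H), (φ ^ n) g = g ^ w ^ n := by
    intro n g
    induction n with
    | zero => simp
    | succ n ih => rw [pow_succ', MulAut.mul_apply, ih, hw, ← zpow_mul, ← pow_succ]
  have hr_dvd_orderOf : r ∣ orderOf y := by
    obtain ⟨j, -, hj⟩ := (Nat.dvd_prime_pow hr).1 (hH ▸ orderOf_dvd_natCard y)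
    rcases j with _ | j
    · exact absurd (orderOf_eq_one_iff.1 (by simpa using hj)) hy
    · exact hj ▸ dvd_pow_self r j.succ_ne_zero
  have hr_dvd_w : (r : ℤ) ∣ w - 1 := by
    refine (Int.natCast_dvd_natCast.2 hr_dvd_orderOf).trans (orderOf_dvd_iff_zpow_eq_one.2 ?_)
    rw [zpow_sub_one, ← hw, hφy, mul_inv_cancel]
  have hφ_pow_eq_one : φ ^ r ^ k = 1 := by
    ext g
    have hdvd : (orderOf g : ℤ) ∣ w ^ r ^ k - 1 := by
      have hr_pow := dvd_sub_pow_of_dvd_sub hr_dvd_w k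
      rw [one_pow] at hr_pow
      exact (Int.natCast_dvd_natCast.2 (hH ▸ orderOf_dvd_natCard g)).trans
        (by push_cast; exact (pow_dvd_pow _ k.le_succ).trans hr_pow)
    rw [hφ_pow, MulAut.one_apply, ← mul_inv_eq_one, ← zpow_sub_one]
    exact orderOf_dvd_iff_zpow_eq_one.1 hdvd
  obtain ⟨n, -, hn⟩ := (Nat.dvd_prime_pow hr).1 (orderOf_dvd_of_pow_eq_one hφ_pow_eq_one)
  exact ⟨n, hn⟩

theorem zpow_eq_one_of_mem_zpowers {c x : G} (hx : x ∈ zpowers c) {n : ℤ}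
    (hn : (orderOf c : ℤ) ∣ n) : x ^ n = 1 :=
  orderOf_dvd_iff_zpow_eq_one.1
    ((Int.natCast_dvd_natCast.2 (orderOf_dvd_of_mem_zpowers hx)).trans hn)

theorem mulAut_conj_eq_one_iff {g : G} : MulAut.conj g = 1 ↔ g ∈ center G := by
  rw [mem_center_iff, DFunLike.ext_iff]
  refine forall_congr' fun x => ?_
  rw [MulAut.conj_apply, MulAut.one_apply, mul_inv_eq_iff_eq_mul, eq_comm]

theorem injOn_mulAut_conj_of_inf_center_eq_bot {H : Subgroup G} (hH : H ⊓ center G = ⊥) :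
    Set.InjOn MulAut.conj (H : Set G) := by
  intro u hu v hv huv
  have hvu : v⁻¹ * u ∈ H ⊓ center G :=
    ⟨H.mul_mem (H.inv_mem hv) hu,
      mulAut_conj_eq_one_iff.1 (by rw [map_mul, map_inv, huv, inv_mul_cancel])⟩
  rw [hH, mem_bot, inv_mul_eq_one] at hvu
  exact hvu.symm

theorem conj_mulAut_apply (A : MulAut G) (g : G) :
    MulAut.conj (A g) = A * MulAut.conj g * A⁻¹ := by
  ext x
  simp [mul_assoc]

theorem IsGammaFunction.map_circ {γ : G → MulAut G} (hγ : IsGammaFunction γ) (g h : G) :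
    γ (circ γ g h) = γ h * γ g :=
  hγ g h

theorem IsGammaFunction.map_one {γ : G → MulAut G} (hγ : IsGammaFunction γ) : γ 1 = 1 := by
  simpa using hγ 1 1

theorem IsGammaFunction.map_inv_apply_inv {γ : G → MulAut G} (hγ : IsGammaFunction γ) (a : G) :
    γ ((γ a)⁻¹ a⁻¹) = (γ a)⁻¹ := by
  have h := hγ ((γ a)⁻¹ a⁻¹) a
  rw [MulAut.apply_inv_self, inv_mul_cancel, hγ.map_one] at h
  exact eq_inv_of_mul_eq_one_right h.symm

theorem IsGammaFunction.exists_zpow_of_eq_conj {γ : G → MulAut G} (hγ : IsGammaFunction γ)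
    {c : G} {σ : G → G} (hσ : ∀ x ∈ zpowers c, σ x ∈ zpowers c)
    (hγσ : ∀ x ∈ zpowers c, γ x = MulAut.conj (σ x))
    (hinj : Set.InjOn MulAut.conj (zpowers c : Set G)) :
    ∃ m : ℤ, ∀ x ∈ zpowers c, σ x = x ^ m := by
  have hσ_mul : ∀ u ∈ zpowers c, ∀ v ∈ zpowers c, σ (u * v) = σ u * σ v := by
    intro u hu v hv
    have hfix : γ v u = u := by
      rw [hγσ v hv, MulAut.conj_apply, setLike_mul_comm (hσ v hv) hu, mul_inv_cancel_right]
    refine hinj (hσ _ (mul_mem hu hv)) (mul_mem (hσ u hu) (hσ v hv)) ?_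
    calc MulAut.conj (σ (u * v)) = γ (γ v u * v) := by rw [hfix, hγσ _ (mul_mem hu hv)]
      _ = MulAut.conj (σ v * σ u) := by rw [hγ, hγσ u hu, hγσ v hv, map_mul]
      _ = MulAut.conj (σ u * σ v) := by rw [setLike_mul_comm (hσ v hv) (hσ u hu)]
  let σC : zpowers c →* zpowers c :=
    MonoidHom.mk' (fun x => ⟨σ x, hσ x x.2⟩) fun u v => Subtype.ext (hσ_mul u u.2 v v.2)
  obtain ⟨m, hm⟩ := σC.map_cyclic
  exact ⟨m, fun x hx => congrArg Subtype.val (hm ⟨x, hx⟩)⟩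

theorem IsGammaFunction.conj_fixes_zpow_mul_one_sub {γ : G → MulAut G} (hγ : IsGammaFunction γ)
    {H : Subgroup G} [H.Characteristic] [IsMulCommutative H]
    (hinj : Set.InjOn MulAut.conj (H : Set G)) {m : ℤ}
    (hγm : ∀ x ∈ H, γ x = MulAut.conj (x ^ m)) (a : G) {u : G} (hu : u ∈ H) :
    a⁻¹ * u ^ (m * (1 - m)) * a = u ^ (m * (1 - m)) := by
  have hmem : ∀ B : MulAut G, ∀ g ∈ H, B g ∈ H := fun B g hg =>
    characteristic_iff_le_comap.1 ‹_› B hg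
  set A := γ a
  set x := A⁻¹ u
  set b := A⁻¹ a⁻¹
  have hAx : A x = u := MulAut.apply_inv_self G A u
  have hγua : γ (u * a) = A * MulAut.conj (x ^ m) := by
    rw [← hAx, ← hγm x (hmem _ u hu), ← hγ.map_circ, circ]
  set y := (MulAut.conj a)⁻¹ (u ^ (1 - m))
  set z := circ γ b (u * a)
  have hz : z = u ^ m * y := by
    simp only [z, b, y, circ, hγua, MulAut.mul_apply, MulAut.conj_apply, MulAut.conj_inv_apply,
      map_mul, map_inv, map_zpow A, hAx, MulAut.apply_inv_self]
    group
  have hγz : γ z = MulAut.conj (u ^ m) := by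
    rw [hγ.map_circ, hγ.map_inv_apply_inv, hγua, ← conj_mulAut_apply, map_zpow A, hAx]
  have hzH : z ∈ H := hz ▸ mul_mem (zpow_mem hu m) (hmem _ _ (zpow_mem hu _))
  have hzm : z ^ m = u ^ m :=
    hinj (zpow_mem hzH m) (zpow_mem hu m) ((hγm z hzH).symm.trans hγz)
  have hym : y ^ m = u ^ (m * (1 - m)) := by
    have hcomm : Commute (u ^ m) y := setLike_mul_comm (zpow_mem hu m) (hmem _ _ (zpow_mem hu _))
    rw [← mul_right_inj ((u ^ m) ^ m), ← hcomm.mul_zpow, ← hz, hzm, ← zpow_mul, ← zpow_add]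
    ring_nf
  calc a⁻¹ * u ^ (m * (1 - m)) * a = y ^ m := by
        rw [← MulAut.conj_inv_apply, ← map_zpow, ← zpow_mul, mul_comm]
    _ = u ^ (m * (1 - m)) := hym

theorem duality_sigma_zero_or_one_general
    {G : Type u} [Group G]
    {r : ℕ} (hr : r.Prime) (c : G) {k : ℕ} (hc : orderOf c = r ^ k)
    (hchar : (Subgroup.zpowers c).Characteristic)
    (hCZ : Subgroup.zpowers c ⊓ Subgroup.center G = ⊥)
    (a : G) (φ : MulAut (Subgroup.zpowers c))
    (hφ : ∀ x : Subgroup.zpowers c, (φ x : G) = a⁻¹ * x * a)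
    (hφord : ¬ ∃ m : ℕ, orderOf φ = r ^ m)
    (γ : G → MulAut G) (hγ : IsGammaFunction γ)
    (σ : G → G) (hσ : ∀ x ∈ Subgroup.zpowers c, σ x ∈ Subgroup.zpowers c)
    (hγσ : ∀ x ∈ Subgroup.zpowers c, γ x = MulAut.conj (σ x)) :
    (∀ x ∈ Subgroup.zpowers c, σ x = 1 ∧ γ x = 1) ∨
    (∀ x ∈ Subgroup.zpowers c, σ x = x ∧ γ x = MulAut.conj x ∧
      MulAut.conj x * γ x⁻¹ = 1) := by
  have hinj := injOn_mulAut_conj_of_inf_center_eq_bot hCZ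
  obtain ⟨m, hσm⟩ := hγ.exists_zpow_of_eq_conj hσ hγσ hinj
  have hγm : ∀ x ∈ zpowers c, γ x = MulAut.conj (x ^ m) := fun x hx => by
    rw [hγσ x hx, hσm x hx]
  have hct : c ^ (m * (1 - m)) = 1 := by
    by_contra hne
    refine hφord (exists_orderOf_eq_prime_pow_of_apply_eq_self hr
      (by rw [Nat.card_zpowers, hc]) φ (y := ⟨_, zpow_mem (mem_zpowers c) (m * (1 - m))⟩)
      (by simpa [Subtype.ext_iff] using hne) (Subtype.ext ?_))
    exact (hφ _).trans (hγ.conj_fixes_zpow_mul_one_sub hinj hγm a (mem_zpowers c))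
  have hc' : (orderOf c : ℤ) = (r : ℤ) ^ k := by rw [hc, Nat.cast_pow]
  rw [← orderOf_dvd_iff_zpow_eq_one, hc'] at hct
  rcases pow_dvd_or_pow_dvd_of_isCoprime (Nat.prime_iff_prime_int.1 hr) ⟨1, 1, by ring⟩ hct
    with hm | hm <;> rw [← hc'] at hm
  · refine .inl fun x hx => ?_
    have hσx : σ x = 1 := (hσm x hx).trans (zpow_eq_one_of_mem_zpowers hx hm)
    exact ⟨hσx, by rw [hγσ x hx, hσx, map_one]⟩
  · have hσ_eq : ∀ x ∈ zpowers c, σ x = x := fun x hx => by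
      have h := zpow_eq_one_of_mem_zpowers hx hm
      rw [zpow_sub, zpow_one, mul_inv_eq_one] at h
      rw [hσm x hx, ← h]
    refine .inr fun x hx => ⟨hσ_eq x hx, by rw [hγσ x hx, hσ_eq x hx], ?_⟩
    rw [hγσ _ (inv_mem hx), hσ_eq _ (inv_mem hx), ← map_mul, mul_inv_cancel, map_one]

/-- Proposition `prop:duality` of the paper.  With `C = ⟨c⟩` cyclic of
prime-power order `r^k`, characteristic, `C ∩ Z(G) = 1`, and some `a ∈ G` inducing on `C`
by conjugation an automorphism whose order is not a power of `r`: if `γ(c') = ι(c'^{-σ})`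
on `C` (i.e. `γ c' = MulAut.conj (σ c')`), then either `σ = 0` (so `C ≤ ker γ`) or
`σ = 1` (so `γ c' = ι(c'⁻¹) = MulAut.conj c'` and `C ≤ ker γ̃`, where
`γ̃ x = MulAut.conj x * γ x⁻¹`). -/
theorem duality_sigma_zero_or_one
    {G : Type u} [Group G] [Finite G] (hnab : ∃ x y : G, x * y ≠ y * x)
    {r : ℕ} (hr : r.Prime) (c : G) {k : ℕ} (hc : orderOf c = r ^ k)
    (hchar : (Subgroup.zpowers c).Characteristic)
    (hCZ : Subgroup.zpowers c ⊓ Subgroup.center G = ⊥)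
    (a : G) (φ : MulAut (Subgroup.zpowers c))
    (hφ : ∀ x : Subgroup.zpowers c, (φ x : G) = a⁻¹ * x * a)
    (hφord : ¬ ∃ m : ℕ, orderOf φ = r ^ m)
    (γ : G → MulAut G) (hγ : IsGammaFunction γ)
    (σ : G → G) (hσ : ∀ x ∈ Subgroup.zpowers c, σ x ∈ Subgroup.zpowers c)
    (hγσ : ∀ x ∈ Subgroup.zpowers c, γ x = MulAut.conj (σ x)) :
    (∀ x ∈ Subgroup.zpowers c, σ x = 1 ∧ γ x = 1) ∨
    (∀ x ∈ Subgroup.zpowers c, σ x = x ∧ γ x = MulAut.conj x ∧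
      MulAut.conj x * γ x⁻¹ = 1) :=
  duality_sigma_zero_or_one_general hr c hc hchar hCZ a φ hφ hφord γ hγ σ hσ hγσ

end HGS
end

section
/- Let G be a group of order mp, where p is a prime not dividing m, and assume G has a unique Sylow p-subgroup P. Let M ≤ G be a subgroup of order m and assume p does not divide |Aut(M)|. Let N be a regular subgroup of Hol(G), γ its associated gamma function, and ν(h) = γ(h)·ρ(h). Then: (1) ν(P) ≤ N, so that ν(P) is a Sylow p-subgroup of N; (2) ν(P) ∈ { ρ(P), λ(P) }, where λ is the left regular representation; (3) [ρ(G), ν(P)] ≤ ν(P). -/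
/- Formalization of results from "Hopf-Galois structures on extensions of degree p²q and
skew braces of order p²q: the cyclic Sylow p-subgroup case" (Campedel, Caranti, Del Corso).

Conventions: the paper composes permutations/automorphisms left-to-right and writes
`x^α` for the action; in Mathlib composition is right-to-left, so the paper's product
`αβ` is rendered as `β * α`, the paper's `x^α` as `α x`, and the paper's conjugate
`α^β = β⁻¹αβ` as `β * α * β⁻¹`. -/

namespace HGS

universe u v

variable {G : Type*} [Group G]

/-- The right regular representation `ρ`: `rhoPerm g` is the permutation `x ↦ x * g`. -/
def rhoPerm (g : G) : Equiv.Perm G := Equiv.mulRight g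

/-- The image `ρ(G)` of the right regular representation, as a subgroup of `Equiv.Perm G`. -/
def rhoSubgroup (G : Type*) [Group G] : Subgroup (Equiv.Perm G) where
  carrier := Set.range (rhoPerm (G := G))
  one_mem' := ⟨1, by ext x; simp [rhoPerm]⟩
  mul_mem' := by
    rintro _ _ ⟨g, rfl⟩ ⟨h, rfl⟩
    exact ⟨h * g, by ext x; simp [rhoPerm, Equiv.Perm.mul_apply, mul_assoc]⟩
  inv_mem' := by
    rintro _ ⟨g, rfl⟩
    exact ⟨g⁻¹, by ext x; simp [rhoPerm, Equiv.Perm.inv_def, Equiv.mulRight_symm]⟩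

/-- The (permutational) holomorph of `G`: the normalizer in the symmetric group
`Perm G` of the image of the right regular representation. -/
def Hol (G : Type*) [Group G] : Subgroup (Equiv.Perm G) :=
  Subgroup.normalizer ((rhoSubgroup G : Subgroup (Equiv.Perm G)) : Set (Equiv.Perm G))

/-- A subgroup `N ≤ Perm G` is regular if it acts simply transitively on the set `G`. -/
def IsRegularSubgroup (N : Subgroup (Equiv.Perm G)) : Prop :=
  ∀ x y : G, ∃! n : N, (n : Equiv.Perm G) x = y

/-- `nu γ h` is the permutation `ν(h) = γ(h)ρ(h) : x ↦ (γ h x) * h`. -/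
def nu (γ : G → MulAut G) (h : G) : Equiv.Perm G :=
  rhoPerm h * (γ h).toEquiv

/-! For `h ∈ P`, `ν(h)` lies in the subgroup `ν(P)` of order `p`, on which `ν(h) ↦ γ(h)` is a
homomorphism, so `γ(h)ᵖ = 1`. An automorphism of order dividing `p` fixes the cyclic group `P`
pointwise (`|Aut P| = p - 1`) and induces the identity on `G/P ≅ M` (as `p ∤ |Aut M|`), so
`g ↦ g⁻¹ γ(h)(g)` is a `P`-valued derivation; since `p ∤ |M|` it is inner, i.e. `γ(h)` is
conjugation by an element of `P`. For a generator `u` of `P` with `γ(u) = conj(uᵗ)` this gives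
`γ(uⁿ) = conj(uᵗⁿ)`. Since `ν(G)` is a group, it normalizes `ν(P)`, and this forces
`t(1 - t)(c - 1) = 0` in `ZMod p` whenever `g⁻¹ u g = uᶜ`. So either `P` is central and `γ` is
trivial on `P`, or `t ∈ {0, 1}`: `ν = ρ` or `ν = λ` on `P`. In both cases `ρ(G)` normalizes
`ν(P)`. -/

section GroupTheory

variable {p : ℕ}

theorem eq_one_of_pow_eq_one_of_not_dvd_card (hp : p.Prime) {x : G} (hx : x ^ p = 1)
    (hpG : ¬ p ∣ Nat.card G) : x = 1 := by
  rcases (Nat.dvd_prime hp).mp (orderOf_dvd_of_pow_eq_one hx) with h | h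
  · exact orderOf_eq_one_iff.mp h
  · exact absurd (h ▸ orderOf_dvd_natCard x) hpG

theorem commutator_le_of_conj_mem {H K : Subgroup G} (h : ∀ x ∈ H, ∀ y ∈ K, x * y * x⁻¹ ∈ K) :
    ⁅H, K⁆ ≤ K :=
  Subgroup.commutator_le.mpr fun x hx y hy => K.mul_mem (h x hx y hy) (K.inv_mem hy)

theorem card_sylow_eq_of_card_eq_mul [Finite G] (hp : p.Prime) {m : ℕ} (hpm : ¬ p ∣ m)
    (hcard : Nat.card G = m * p) (P : Sylow p G) : Nat.card P = p := by
  have : Fact p.Prime := ⟨hp⟩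
  have hm0 : m ≠ 0 := by
    rintro rfl
    exact Nat.card_pos.ne' (hcard.trans (zero_mul p))
  rw [P.card_eq_multiplicity, hcard, Nat.factorization_mul hm0 hp.ne_zero, Finsupp.add_apply,
    Nat.factorization_eq_zero_of_not_dvd hpm, hp.factorization, Finsupp.single_eq_same, zero_add,
    pow_one]

theorem zpow_eq_zpow_iff_intCast {u : G} (hu : orderOf u = p) {m n : ℤ} :
    u ^ m = u ^ n ↔ (m : ZMod p) = n := by
  rw [zpow_eq_zpow_iff_modEq, hu, ZMod.intCast_eq_intCast_iff]

theorem commute_of_commute_zpow (hp : p.Prime) {u g : G} (hu : orderOf u = p) {n : ℤ}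
    (hn : (n : ZMod p) ≠ 0) (h : Commute (u ^ n) g) : Commute u g := by
  have : Fact p.Prime := ⟨hp⟩
  obtain ⟨m, hm⟩ := ZMod.intCast_surjective (n : ZMod p)⁻¹
  have hu' : u ^ (n * m) = u := by
    rw [← zpow_one u, ← zpow_mul, zpow_eq_zpow_iff_intCast hu]
    simp [hm, hn]
  rw [← hu', zpow_mul]
  exact h.zpow_left m

def quotientMulAut (H : Subgroup G) [H.Characteristic] : MulAut G →* MulAut (G ⧸ H) where
  toFun α := QuotientGroup.congr H H α (Subgroup.characteristic_iff_map_eq.mp inferInstance α)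
  map_one' := by
    ext x
    induction x using QuotientGroup.induction_on
    rfl
  map_mul' α β := by
    ext x
    induction x using QuotientGroup.induction_on
    rfl

theorem quotientMulAut_mk (H : Subgroup G) [H.Characteristic] (α : MulAut G) (g : G) :
    quotientMulAut H α g = (α g : G ⧸ H) :=
  rfl

open scoped IsMulCommutative in
theorem exists_conj_eq_of_coprime {A M : Subgroup G} [A.Normal] [IsMulCommutative A] [Finite M]
    (hcop : (Nat.card A).Coprime (Nat.card M)) (f : G →* G) (hf : ∀ y ∈ M, y⁻¹ * f y ∈ A) :
    ∃ b ∈ A, ∀ y ∈ M, f y = b * y * b⁻¹ := by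
  have := Fintype.ofFinite M
  let σ : M → MulAut A := fun y => MulAut.conjNormal (y⁻¹ : G)
  let δ : M → A := fun y => ⟨(y : G)⁻¹ * f y, hf y y.2⟩
  have hσ : ∀ y a, (σ y a : G) = (y : G)⁻¹ * a * y := by
    intro y a
    simp [σ]
  have hδ : ∀ x y : M, δ (x * y) = σ y (δ x) * δ y := by
    intro x y
    ext
    simp only [δ, Subgroup.coe_mul, hσ, map_mul]
    group
  -- `δ` is the coboundary of an `|M|`-th root `b` of `∏ₓ δ x`.
  set a := ∏ x, δ x
  have ha : ∀ y, σ y a * δ y ^ Nat.card M = a := fun y => calc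
    σ y a * δ y ^ Nat.card M = ∏ x, σ y (δ x) * δ y := by
      rw [Finset.prod_mul_distrib, map_prod, Finset.prod_const, Finset.card_univ,
        Nat.card_eq_fintype_card]
    _ = ∏ x, δ (x * y) := by simp_rw [hδ]
    _ = a := Fintype.prod_equiv (Equiv.mulRight y) _ _ (fun _ => rfl)
  obtain ⟨b, hb⟩ := hcop.pow_left_bijective.2 a
  refine ⟨(b : G)⁻¹, A.inv_mem b.2, fun y hy => ?_⟩
  have hδy : δ ⟨y, hy⟩ = (σ ⟨y, hy⟩ b)⁻¹ * b := by
    apply hcop.pow_left_bijective.1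
    simp only [mul_pow, inv_pow, ← map_pow, hb]
    rw [eq_inv_mul_iff_mul_eq, ha]
  have hδy' := congrArg Subtype.val hδy
  simp only [δ, Subgroup.coe_mul, Subgroup.coe_inv, hσ] at hδy'
  calc f y = y * (y⁻¹ * f y) := by group
    _ = (b : G)⁻¹ * y * (b : G)⁻¹⁻¹ := by
      simp only [hδy', mul_inv_rev, inv_inv, mul_assoc, mul_inv_cancel_left]

section Characteristic

variable {P : Subgroup G} [P.Characteristic]

theorem apply_eq_self_of_pow_eq_one (hp : p.Prime) (hP : Nat.card P = p) {α : MulAut G}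
    (hα : α ^ p = 1) {x : G} (hx : x ∈ P) : α x = x := by
  have : Fact p.Prime := ⟨hp⟩
  have : Finite P := Nat.finite_of_card_ne_zero (hP ▸ hp.ne_zero)
  have : IsCyclic P := isCyclic_of_prime_card hP
  have hres : MulAut.characteristic P α = 1 := by
    refine eq_one_of_pow_eq_one_of_not_dvd_card hp (by rw [← map_pow, hα, map_one]) ?_
    rw [IsCyclic.card_mulAut, hP, Nat.totient_prime hp]
    exact Nat.not_dvd_of_pos_of_lt (Nat.sub_pos_of_lt hp.one_lt) (Nat.sub_lt hp.pos one_pos)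
  exact congrArg Subtype.val (DFunLike.congr_fun hres ⟨x, hx⟩)

theorem inv_mul_apply_mem_of_pow_eq_one (hp : p.Prime) {M : Subgroup G}
    (hcompl : M.IsComplement' P) (hAutM : ¬ p ∣ Nat.card (MulAut M)) {α : MulAut G}
    (hα : α ^ p = 1) (g : G) : g⁻¹ * α g ∈ P := by
  let Φ : MulAut G →* MulAut M :=
    (MulAut.congr hcompl.QuotientMulEquiv).toMonoidHom.comp (quotientMulAut P)
  have hΦ : Φ α = 1 :=
    eq_one_of_pow_eq_one_of_not_dvd_card hp (by rw [← map_pow, hα, map_one]) hAutM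
  have hα' : quotientMulAut P α = 1 :=
    (MulAut.congr hcompl.QuotientMulEquiv).injective (hΦ.trans (map_one _).symm)
  have hg : ((α g : G) : G ⧸ P) = g := by
    rw [← quotientMulAut_mk, hα', MulAut.one_apply]
  exact QuotientGroup.eq.mp hg.symm

theorem exists_eq_conj_of_pow_eq_one [Finite G] (hp : p.Prime) (hP : Nat.card P = p)
    {M : Subgroup G} (hcard : Nat.card M * Nat.card P = Nat.card G)
    (hcop : (Nat.card M).Coprime (Nat.card P)) (hAutM : ¬ p ∣ Nat.card (MulAut M))
    {α : MulAut G} (hα : α ^ p = 1) : ∃ b ∈ P, α = MulAut.conj b := by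
  have : Fact p.Prime := ⟨hp⟩
  have : IsCyclic P := isCyclic_of_prime_card hP
  have hcompl : M.IsComplement' P := Subgroup.isComplement'_of_coprime hcard hcop
  obtain ⟨b, hbP, hb⟩ := exists_conj_eq_of_coprime hcop.symm α.toMonoidHom
    (fun y _ => inv_mul_apply_mem_of_pow_eq_one hp hcompl hAutM hα y)
  have hle : M ⊔ P ≤ MonoidHom.eqLocus α.toMonoidHom (MulAut.conj b).toMonoidHom := by
    refine sup_le (fun y hy => hb y hy) (fun x hx => ?_)
    show α x = b * x * b⁻¹
    rw [apply_eq_self_of_pow_eq_one hp hP hα hx, setLike_mul_comm hbP hx, mul_inv_cancel_right]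
  rw [hcompl.sup_eq_top, top_le_iff] at hle
  exact ⟨b, hbP, MulEquiv.ext fun g => (hle ▸ Subgroup.mem_top g :)⟩

end Characteristic

end GroupTheory

section GammaFunction

variable {γ : G → MulAut G}

theorem nu_apply (h x : G) : nu γ h x = γ h x * h :=
  rfl

theorem nu_apply_one (h : G) : nu γ h 1 = h := by
  rw [nu_apply, map_one, one_mul]

theorem nu_injective : Function.Injective (nu γ) := fun a b hab => by
  rw [← nu_apply_one (γ := γ) a, hab, nu_apply_one]

theorem nu_inv_apply (h x : G) : (nu γ h)⁻¹ x = (γ h)⁻¹ (x * h⁻¹) := by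
  rw [Equiv.Perm.inv_eq_iff_eq, nu_apply, MulAut.apply_inv_self, inv_mul_cancel_right]

theorem nu_eq_rhoPerm {h : G} (hγ : γ h = 1) : nu γ h = rhoPerm h := by
  ext x
  rw [nu_apply, hγ, MulAut.one_apply]
  rfl

theorem nu_eq_mulLeft {h : G} (hγ : γ h = MulAut.conj h) : nu γ h = Equiv.mulLeft h := by
  ext x
  rw [nu_apply, hγ, MulAut.conj_apply, inv_mul_cancel_right]
  rfl

variable (hγ : IsGammaFunction γ)
include hγ

theorem gamma_one : γ 1 = 1 := by
  simpa using hγ 1 1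

theorem nu_one : nu γ 1 = 1 := by
  ext x
  rw [nu_apply, gamma_one hγ, MulAut.one_apply, mul_one]
  rfl

theorem nu_mul (a b : G) : nu γ a * nu γ b = nu γ (γ a b * a) := by
  ext x
  rw [Equiv.Perm.mul_apply, nu_apply, nu_apply, nu_apply, hγ b a, map_mul, MulAut.mul_apply,
    mul_assoc]

theorem nu_inv (a : G) : (nu γ a)⁻¹ = nu γ ((γ a)⁻¹ a⁻¹) :=
  inv_eq_of_mul_eq_one_right (by rw [nu_mul hγ, MulAut.apply_inv_self, inv_mul_cancel, nu_one hγ])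

def nuSubgroup (H : Subgroup G) [H.Characteristic] : Subgroup (Equiv.Perm G) where
  carrier := nu γ '' H
  one_mem' := ⟨1, H.one_mem, nu_one hγ⟩
  mul_mem' := by
    rintro _ _ ⟨a, ha, rfl⟩ ⟨b, hb, rfl⟩
    exact ⟨_, H.mul_mem (Subgroup.characteristic_iff_le_comap.mp ‹_› (γ a) hb) ha,
      (nu_mul hγ a b).symm⟩
  inv_mem' := by
    rintro _ ⟨a, ha, rfl⟩
    exact ⟨_, Subgroup.characteristic_iff_le_comap.mp ‹_› (γ a)⁻¹ (H.inv_mem ha),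
      (nu_inv hγ a).symm⟩

/-- `ν(h) ↦ γ(h)`, as `ν(h) 1 = h`. -/
def gammaHom (H : Subgroup G) [H.Characteristic] : nuSubgroup hγ H →* MulAut G where
  toFun σ := γ ((σ : Equiv.Perm G) 1)
  map_one' := gamma_one hγ
  map_mul' := by
    rintro ⟨_, a, -, rfl⟩ ⟨_, b, -, rfl⟩
    show γ ((nu γ a * nu γ b) 1) = γ (nu γ a 1) * γ (nu γ b 1)
    rw [nu_mul hγ, nu_apply_one, nu_apply_one, nu_apply_one, hγ]

variable {H : Subgroup G} [H.Characteristic]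

theorem card_nuSubgroup : Nat.card (nuSubgroup hγ H) = Nat.card H :=
  Nat.card_image_of_injective nu_injective _

theorem eq_nu_apply_one_of_mem {σ : Equiv.Perm G} (hσ : σ ∈ nuSubgroup hγ H) :
    σ = nu γ (σ 1) := by
  obtain ⟨h, -, rfl⟩ := hσ
  rw [nu_apply_one]

theorem gamma_pow_card_eq_one [Finite H] {h : G} (hh : h ∈ H) : γ h ^ Nat.card H = 1 := by
  let σ : nuSubgroup hγ H := ⟨nu γ h, h, hh, rfl⟩
  have hσ : gammaHom hγ H σ = γ h := congrArg γ (nu_apply_one h)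
  rw [← hσ, ← map_pow, ← card_nuSubgroup hγ, pow_card_eq_one', map_one]

theorem gamma_zpow_of_commute {u a : G} (hu : γ u = MulAut.conj a) (hau : Commute a u) (n : ℤ) :
    γ (u ^ n) = MulAut.conj (a ^ n) := by
  have hstep : ∀ n : ℤ, γ (u ^ (n + 1)) = MulAut.conj a * γ (u ^ n) := fun n => by
    have hfix : γ u (u ^ n) = u ^ n := by
      rw [hu, MulAut.conj_apply, (hau.zpow_right n).eq, mul_inv_cancel_right]
    rw [← hu, ← hγ, hfix, zpow_add_one]
  induction n using Int.induction_on with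
  | zero => rw [zpow_zero, zpow_zero, gamma_one hγ, map_one]
  | succ n ih => rw [hstep, ih, ← map_mul, ← zpow_one_add, add_comm]
  | pred n ih =>
    rw [← inv_mul_eq_iff_eq_mul.mpr (hstep _), sub_add_cancel, ih, ← map_inv, ← map_mul,
      ← zpow_neg_one, ← zpow_add, neg_add_eq_sub]

/-- `ν(G)` is a group, so it contains `ν(g) ν(h) ν(g)⁻¹`; comparing values at `1` identifies it
with `ν(z)`. -/
theorem gamma_eq_conj_of_conj {a h : G} (ha : γ h = MulAut.conj a) (g : G) :
    γ (γ g a * (g⁻¹ * γ g (a⁻¹ * h) * g)) = MulAut.conj (γ g a) := by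
  set z := γ g a * (g⁻¹ * γ g (a⁻¹ * h) * g)
  have happly : ∀ x, (nu γ g * nu γ h * (nu γ g)⁻¹) x = γ g a * x * (γ g a)⁻¹ * z := by
    intro x
    simp only [Equiv.Perm.mul_apply, nu_inv_apply, nu_apply, ha, MulAut.conj_apply, z, map_mul,
      map_inv, MulAut.apply_inv_self]
    group
  have hmem : nu γ g * nu γ h * (nu γ g)⁻¹ ∈ nuSubgroup hγ ⊤ :=
    Subgroup.mul_mem _ (Subgroup.mul_mem _ ⟨g, trivial, rfl⟩ ⟨h, trivial, rfl⟩)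
      (Subgroup.inv_mem _ ⟨g, trivial, rfl⟩)
  have hnu : nu γ g * nu γ h * (nu γ g)⁻¹ = nu γ z := by
    rw [eq_nu_apply_one_of_mem hγ hmem, happly, mul_one, mul_inv_cancel, one_mul]
  ext x
  have hx := happly x
  rw [hnu, nu_apply] at hx
  rw [MulAut.conj_apply]
  exact mul_right_cancel hx

theorem commutator_rhoSubgroup_le_of_gamma_eq_one (hρ : ∀ h ∈ H, γ h = 1) :
    ⁅rhoSubgroup G, nuSubgroup hγ H⁆ ≤ nuSubgroup hγ H := by
  refine commutator_le_of_conj_mem ?_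
  rintro _ ⟨g, rfl⟩ _ ⟨h, hh, rfl⟩
  have hconj : g⁻¹ * h * g ∈ H := by
    simpa using Subgroup.Normal.conj_mem inferInstance h hh g⁻¹
  refine ⟨g⁻¹ * h * g, hconj, ?_⟩
  rw [nu_eq_rhoPerm (hρ _ hconj), nu_eq_rhoPerm (hρ h hh)]
  ext x
  simp [rhoPerm, mul_assoc]

theorem commutator_rhoSubgroup_le_of_gamma_eq_conj (hlam : ∀ h ∈ H, γ h = MulAut.conj h) :
    ⁅rhoSubgroup G, nuSubgroup hγ H⁆ ≤ nuSubgroup hγ H := by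
  refine commutator_le_of_conj_mem ?_
  rintro _ ⟨g, rfl⟩ _ ⟨h, hh, rfl⟩
  refine ⟨h, hh, ?_⟩
  ext x
  simp [nu_eq_mulLeft (hlam h hh), rhoPerm, mul_assoc]

end GammaFunction

section PrimeOrder

variable {p : ℕ} {γ : G → MulAut G} (hγ : IsGammaFunction γ) {P : Subgroup G} [P.Characteristic]
  {u : G}
include hγ

/-- The relation that `gamma_eq_conj_of_conj` imposes on the exponents. -/
theorem intCast_mul_one_sub_mul_sub_one_eq_zero (hp : p.Prime) (hu : orderOf u = p) {t j c : ℤ}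
    (hγu : γ u = MulAut.conj (u ^ t)) {g : G} (hj : u ^ j = γ g u) (hc : u ^ c = g⁻¹ * u * g)
    (hg : ¬ Commute u g) : (j : ZMod p) * t * (1 - t) * (c - 1) = 0 := by
  have hγg : ∀ n : ℤ, γ g (u ^ n) = u ^ (j * n) := fun n => by rw [map_zpow, ← hj, zpow_mul]
  have hconj : ∀ n : ℤ, g⁻¹ * u ^ n * g = u ^ (c * n) := fun n => by
    have := conj_zpow (a := g⁻¹) (b := u) (i := n)
    rw [inv_inv] at this
    rw [zpow_mul, hc, this]
  have hz : γ g (u ^ t) * (g⁻¹ * γ g ((u ^ t)⁻¹ * u) * g) = u ^ (j * t + c * (j * (1 - t))) := by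
    rw [← zpow_neg, ← zpow_add_one, hγg, hγg, hconj, ← zpow_add, neg_add_eq_sub]
  have hγz : MulAut.conj (u ^ (t * (j * t + c * (j * (1 - t))))) = MulAut.conj (u ^ (j * t)) := by
    rw [zpow_mul, ← gamma_zpow_of_commute hγ hγu ((Commute.refl u).zpow_left t), ← hz,
      gamma_eq_conj_of_conj hγ hγu, hγg]
  have hcomm : Commute (u ^ (t * (j * t + c * (j * (1 - t))) - j * t)) g := by
    have h1 : MulAut.conj (u ^ (t * (j * t + c * (j * (1 - t))) - j * t)) = 1 := by
      rw [zpow_sub, map_mul, map_inv, hγz, mul_inv_cancel]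
    exact mul_inv_eq_iff_eq_mul.mp (DFunLike.congr_fun h1 g)
  by_contra h
  refine hg (commute_of_commute_zpow hp hu (fun h' => h ?_) hcomm)
  push_cast at h'
  linear_combination h'

theorem zpow_eq_one_or_eq_self (hp : p.Prime) (hu : orderOf u = p) (huP : u ∈ P)
    (hgen : ∀ x ∈ P, ∃ n : ℤ, u ^ n = x) {t : ℤ} (hγu : γ u = MulAut.conj (u ^ t)) {g : G}
    (hg : ¬ Commute u g) : u ^ t = 1 ∨ u ^ t = u := by
  have : Fact p.Prime := ⟨hp⟩
  have hmem : ∀ (α : MulAut G) {x}, x ∈ P → α x ∈ P := fun α _ hx =>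
    Subgroup.characteristic_iff_le_comap.mp ‹_› α hx
  have hcast {m n : ℤ} : u ^ m = u ^ n ↔ (m : ZMod p) = n := zpow_eq_zpow_iff_intCast hu
  obtain ⟨j, hj⟩ := hgen _ (hmem (γ g) huP)
  obtain ⟨c, hc⟩ := hgen (g⁻¹ * u * g) (by simpa using hmem (MulAut.conj g⁻¹) huP)
  have hj0 : (j : ZMod p) ≠ 0 := by
    intro h
    have hu1 : u = 1 := by
      rw [← map_eq_one_iff (γ g) (γ g).injective, ← hj, ← zpow_zero u, hcast, h, Int.cast_zero]
    exact hp.one_lt.ne (by rw [← hu, hu1, orderOf_one])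
  have hc1 : (c : ZMod p) ≠ 1 := by
    intro h
    have hcu : g⁻¹ * u * g = u := by
      rw [← hc]
      nth_rw 2 [← zpow_one u]
      rw [hcast, h, Int.cast_one]
    refine hg ?_
    show u * g = g * u
    conv_rhs => rw [← hcu]
    group
  rcases mul_eq_zero.mp (intCast_mul_one_sub_mul_sub_one_eq_zero hγ hp hu hγu hj hc hg) with h | h
  · rcases mul_eq_zero.mp h with h | h
    · left
      rw [← zpow_zero u, hcast, Int.cast_zero]
      exact (mul_eq_zero.mp h).resolve_left hj0
    · right
      nth_rw 2 [← zpow_one u]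
      rw [hcast, Int.cast_one]
      linear_combination -h
  · exact absurd (sub_eq_zero.mp h) hc1

theorem gamma_eq_one_or_eq_conj (hp : p.Prime) (hP : Nat.card P = p)
    (hinner : ∀ h ∈ P, ∃ a ∈ P, γ h = MulAut.conj a) :
    (∀ h ∈ P, γ h = 1) ∨ ∀ h ∈ P, γ h = MulAut.conj h := by
  have : Fact p.Prime := ⟨hp⟩
  obtain ⟨u, huP, hu1⟩ := P.bot_or_exists_ne_one.resolve_left fun h => by
    rw [h, Subgroup.card_bot] at hP
    exact hp.one_lt.ne hP
  have hgen : ∀ x ∈ P, ∃ n : ℤ, u ^ n = x := fun x hx => by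
    obtain ⟨n, hn⟩ := Subgroup.mem_zpowers_iff.mp
      (mem_zpowers_of_prime_card hP (g := ⟨u, huP⟩) (g' := ⟨x, hx⟩) (by simpa using hu1))
    exact ⟨n, congrArg Subtype.val hn⟩
  have hu : orderOf u = p := by
    rcases (Nat.dvd_prime hp).mp (hP ▸ Subgroup.orderOf_dvd_natCard P huP) with h | h
    · exact absurd (orderOf_eq_one_iff.mp h) hu1
    · exact h
  obtain ⟨_, haP, hγu⟩ := hinner u huP
  obtain ⟨t, rfl⟩ := hgen _ haP
  have hγpow := gamma_zpow_of_commute hγ hγu ((Commute.refl u).zpow_left t)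
  suffices MulAut.conj (u ^ t) = 1 ∨ u ^ t = u by
    rcases this with h1 | hut
    · refine Or.inl fun h hh => ?_
      obtain ⟨n, rfl⟩ := hgen h hh
      rw [hγpow, map_zpow, h1, one_zpow]
    · refine Or.inr fun h hh => ?_
      obtain ⟨n, rfl⟩ := hgen h hh
      rw [hγpow, hut]
  by_cases hcen : ∀ g, Commute u g
  · left
    ext g
    rw [MulAut.conj_apply, ((hcen g).zpow_left t).eq, mul_inv_cancel_right, MulAut.one_apply]
  · obtain ⟨g, hg⟩ := not_forall.mp hcen
    exact (zpow_eq_one_or_eq_self hγ hp hu huP hgen hγu hg).imp_left fun h => by rw [h, map_one]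

end PrimeOrder

theorem kohl_generalisation_general
    {G : Type u} [Group G] [Finite G] {m p : ℕ} (hp : p.Prime)
    (hpm : ¬ p ∣ m) (hcard : Nat.card G = m * p)
    (P : Sylow p G) (hPuniq : ∀ Q : Sylow p G, Q = P)
    (M : Subgroup G) (hM : Nat.card M = m) (hAutM : ¬ p ∣ Nat.card (MulAut M))
    (N : Subgroup (Equiv.Perm G))
    (γ : G → MulAut G) (hγ : IsGammaFunction γ) (hass : ∀ h : G, nu γ h ∈ N) :
    (∀ x ∈ (P : Subgroup G), nu γ x ∈ N) ∧
    ∃ S : Subgroup (Equiv.Perm G),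
      (S : Set (Equiv.Perm G)) = nu γ '' ((P : Subgroup G) : Set G) ∧ S ≤ N ∧
      Nat.card S = p ∧
      (nu γ '' ((P : Subgroup G) : Set G) = rhoPerm '' ((P : Subgroup G) : Set G) ∨
        nu γ '' ((P : Subgroup G) : Set G) =
          (fun g : G => Equiv.mulLeft g) '' ((P : Subgroup G) : Set G)) ∧
      ⁅rhoSubgroup G, S⁆ ≤ S := by
  have : Subsingleton (Sylow p G) := ⟨fun Q R => (hPuniq Q).trans (hPuniq R).symm⟩
  have hPcard := card_sylow_eq_of_card_eq_mul hp hpm hcard P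
  have hcop : (Nat.card M).Coprime (Nat.card (P : Subgroup G)) := by
    rw [hM, hPcard]
    exact ((Nat.Prime.coprime_iff_not_dvd hp).mpr hpm).symm
  have hinner : ∀ h ∈ (P : Subgroup G), ∃ a ∈ (P : Subgroup G), γ h = MulAut.conj a :=
    fun h hh => exists_eq_conj_of_pow_eq_one hp hPcard (by rw [hM, hPcard, hcard]) hcop hAutM
      (hPcard ▸ gamma_pow_card_eq_one hγ hh)
  refine ⟨fun x _ => hass x, nuSubgroup hγ P, rfl, fun _ ⟨h, _, hh⟩ => hh ▸ hass h,
    (card_nuSubgroup hγ).trans hPcard, ?_⟩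
  rcases gamma_eq_one_or_eq_conj hγ hp hPcard hinner with hρ | hlam
  · exact ⟨Or.inl (Set.image_congr fun h hh => nu_eq_rhoPerm (hρ h hh)),
      commutator_rhoSubgroup_le_of_gamma_eq_one hγ hρ⟩
  · exact ⟨Or.inr (Set.image_congr fun h hh => nu_eq_mulLeft (hlam h hh)),
      commutator_rhoSubgroup_le_of_gamma_eq_conj hγ hlam⟩

/-- the generalisation of Kohl's theorem in Subsection 2.7 of the
paper.  `λ` is the left regular representation `g ↦ Equiv.mulLeft g`. -/
theorem kohl_generalisation
    {G : Type u} [Group G] [Finite G] {m p : ℕ} (hp : p.Prime)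
    (hpm : ¬ p ∣ m) (hcard : Nat.card G = m * p)
    (P : Sylow p G) (hPuniq : ∀ Q : Sylow p G, Q = P)
    (M : Subgroup G) (hM : Nat.card M = m) (hAutM : ¬ p ∣ Nat.card (MulAut M))
    (N : Subgroup (Equiv.Perm G)) (hN : N ≤ Hol G) (hreg : IsRegularSubgroup N)
    (γ : G → MulAut G) (hγ : IsGammaFunction γ) (hass : ∀ h : G, nu γ h ∈ N) :
    (∀ x ∈ (P : Subgroup G), nu γ x ∈ N) ∧
    ∃ S : Subgroup (Equiv.Perm G),
      (S : Set (Equiv.Perm G)) = nu γ '' ((P : Subgroup G) : Set G) ∧ S ≤ N ∧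
      Nat.card S = p ∧
      (nu γ '' ((P : Subgroup G) : Set G) = rhoPerm '' ((P : Subgroup G) : Set G) ∨
        nu γ '' ((P : Subgroup G) : Set G) =
          (fun g : G => Equiv.mulLeft g) '' ((P : Subgroup G) : Set G)) ∧
      ⁅rhoSubgroup G, S⁆ ≤ S :=
  kohl_generalisation_general hp hpm hcard P hPuniq M hM hAutM N γ hγ hass

end HGS
end
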